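/- Let A and B be positive bounded operators on a complex Hilbert space H with A ≤ B. Then A is an extreme point of the operator interval [0,B] (as a convex subset of the real vector space of bounded operators on H) if and only if there exist a complex Hilbert space K, an injective continuous linear map J : K → H with J ∘ J* = B, and a continuous linear map P : K → K with P* = P and P ∘ P = P (an orthogonal projection), such that A = J ∘ P ∘ J*. -/

import Mathlib

open scoped ComplexOrder

/-- `A` is a positive operator: `⟪A x, x⟫ ≥ 0` for all `x`. -/
def IsPosOp {H : Type*} [NormedAddCommGroup H] [InnerProductSpace ℂ H]
    (A : H →L[ℂ] H) : Prop :=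
  ∀ x : H, 0 ≤ (inner ℂ (A x) x : ℂ)

/-- The Loewner order: `A ≤ B` iff `B - A` is positive. -/
def OpLe {H : Type*} [NormedAddCommGroup H] [InnerProductSpace ℂ H]
    (A B : H →L[ℂ] H) : Prop :=
  IsPosOp (B - A)

/-- The quadratic form of an operator: `A[x] = re ⟪A x, x⟫`. -/
noncomputable def QF {H : Type*} [NormedAddCommGroup H] [InnerProductSpace ℂ H]
    (A : H →L[ℂ] H) (x : H) : ℝ :=
  (inner ℂ (A x) x : ℂ).re

/-- `A` and `B` are singular: the only positive operator below both is `0`. -/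
def SingOp {H : Type*} [NormedAddCommGroup H] [InnerProductSpace ℂ H]
    (A B : H →L[ℂ] H) : Prop :=
  ∀ C : H →L[ℂ] H, IsPosOp C → OpLe C A → OpLe C B → C = 0

/-- `B` is `A`-absolutely continuous: `B` is the strong limit of a monotone increasing
sequence of positive operators, each dominated by a nonnegative multiple of `A`. -/
def AbsCont {H : Type*} [NormedAddCommGroup H] [InnerProductSpace ℂ H]
    (B A : H →L[ℂ] H) : Prop :=
  ∃ Bn : ℕ → H →L[ℂ] H,
    (∀ n, IsPosOp (Bn n)) ∧
    (∀ m n, m ≤ n → OpLe (Bn m) (Bn n)) ∧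
    (∀ n, ∃ c : ℝ, 0 ≤ c ∧ OpLe (Bn n) (c • A)) ∧
    (∀ x : H, Filter.Tendsto (fun n => Bn n x) Filter.atTop (nhds (B x)))

/-- `S = [A]B`: the quadratic form of `S` is `sup_n inf_y (B[x-y] + n·A[y])`. -/
def IsShort {H : Type*} [NormedAddCommGroup H] [InnerProductSpace ℂ H]
    (A B S : H →L[ℂ] H) : Prop :=
  ∀ x : H, QF S x = ⨆ n : ℕ, ⨅ y : H, (QF B (x - y) + (n : ℝ) * QF A y)

universe u

/-! Write `B = J J*` with `J` injective: take any `T` with `B = T T*` and restrict it to the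
orthogonal complement of its kernel. By Douglas' lemma every `C` with `0 ≤ C ≤ J J*` is
`J X J*` for some `0 ≤ X ≤ 1`, and `J*` has dense range, so the real-linear map `X ↦ J X J*` is
injective and carries the interval `[0, 1]` of operators on `K` onto `[0, B]`. An injective
linear map matches extreme points with extreme points, and the extreme points of `[0, 1]` in a
C⋆-algebra are its projections. -/

open Set
open scoped InnerProduct

theorem isPosOp_iff_nonneg {H : Type*} [NormedAddCommGroup H] [InnerProductSpace ℂ H]
    (A : H →L[ℂ] H) : IsPosOp A ↔ 0 ≤ A := by
  simp [IsPosOp, ContinuousLinearMap.nonneg_iff_isPositive,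
    ContinuousLinearMap.isPositive_iff_complex, Complex.nonneg_iff, Complex.ext_iff, eq_comm,
    and_comm]

theorem opLe_iff_le {H : Type*} [NormedAddCommGroup H] [InnerProductSpace ℂ H]
    (A B : H →L[ℂ] H) : OpLe A B ↔ A ≤ B := by
  rw [OpLe, isPosOp_iff_nonneg, ContinuousLinearMap.nonneg_iff_isPositive,
    ContinuousLinearMap.le_def]

theorem LinearMap.image_extremePoints_of_injective {𝕜 E F : Type*} [Ring 𝕜] [PartialOrder 𝕜]
    [IsOrderedRing 𝕜] [AddCommGroup E] [Module 𝕜 E] [AddCommGroup F] [Module 𝕜 F]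
    (f : E →ₗ[𝕜] F) (hf : Function.Injective f) (s : Set E) :
    f '' extremePoints 𝕜 s = extremePoints 𝕜 (f '' s) := by
  have hseg : ∀ x y, f '' openSegment 𝕜 x y = openSegment 𝕜 (f x) (f y) :=
    image_openSegment _ f.toAffineMap
  ext b
  simp only [mem_image, mem_extremePoints, forall_exists_index, and_imp]
  constructor
  · rintro ⟨a, ⟨has, ha⟩, rfl⟩
    refine ⟨⟨a, has, rfl⟩, ?_⟩
    rintro _ x₁ hx₁ rfl _ x₂ hx₂ rfl hmem
    rw [← hseg, hf.mem_set_image] at hmem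
    obtain ⟨rfl, rfl⟩ := ha x₁ hx₁ x₂ hx₂ hmem
    exact ⟨rfl, rfl⟩
  · rintro ⟨⟨a, has, rfl⟩, hb⟩
    refine ⟨a, ⟨has, fun x₁ hx₁ x₂ hx₂ hx => ?_⟩, rfl⟩
    have := hb _ x₁ hx₁ rfl _ x₂ hx₂ rfl (hseg x₁ x₂ ▸ mem_image_of_mem f hx)
    exact ⟨hf this.1, hf this.2⟩

theorem mem_extremePoints_Icc_zero_one_iff {A : Type*} [CStarAlgebra A] [PartialOrder A]
    [StarOrderedRing A] {e : A} : e ∈ extremePoints ℝ (Icc 0 1) ↔ IsStarProjection e := by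
  have hIcc : Icc (0 : A) 1 = {x : A | 0 ≤ x} ∩ Metric.closedBall 0 1 := by
    ext x
    exact CStarAlgebra.mem_Icc_iff_norm_le_one.trans (by simp)
  rw [hIcc, isStarProjection_iff_mem_extremePoints_setOfPred_nonneg_inter_unitClosedBall]

theorem exists_norm_le_one_comp_eq_of_norm_apply_le {𝕜 E F G : Type*}
    [NontriviallyNormedField 𝕜] [NormedAddCommGroup E] [NormedSpace 𝕜 E]
    [NormedAddCommGroup F] [NormedSpace 𝕜 F] [NormedAddCommGroup G] [NormedSpace 𝕜 G]
    [CompleteSpace G] {R : E →L[𝕜] F} {S : E →L[𝕜] G} (hR : DenseRange R)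
    (h : ∀ x, ‖S x‖ ≤ ‖R x‖) : ∃ T : F →L[𝕜] G, ‖T‖ ≤ 1 ∧ T ∘L R = S := by
  have h' : ∀ x, ‖(S : E →ₗ[𝕜] G) x‖ ≤ 1 * ‖(R : E →ₗ[𝕜] F) x‖ := by simpa using h
  refine ⟨(S : E →ₗ[𝕜] G).extendOfNorm R, LinearMap.opNorm_extendOfNorm_le hR zero_le_one h', ?_⟩
  ext x
  exact LinearMap.extendOfNorm_eq hR ⟨1, h'⟩ x

namespace ContinuousLinearMap

section RCLike

variable {𝕜 E F : Type*} [RCLike 𝕜] [NormedAddCommGroup E] [InnerProductSpace 𝕜 E]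
  [NormedAddCommGroup F] [InnerProductSpace 𝕜 F]

theorem re_inner_apply_le_of_le {C D : E →L[𝕜] E} (h : C ≤ D) (x : E) :
    RCLike.re (inner 𝕜 (C x) x) ≤ RCLike.re (inner 𝕜 (D x) x) := by
  have := ((le_def C D).1 h).re_inner_nonneg_left x
  rwa [sub_apply, inner_sub_left, map_sub, sub_nonneg] at this

theorem injective_comp_subtypeL_orthogonal_ker (T : E →L[𝕜] F) :
    Function.Injective (T ∘L T.kerᗮ.subtypeL) := by
  refine (injective_iff_map_eq_zero _).2 fun k hk => ?_
  have : (k : E) ∈ T.ker ⊓ T.kerᗮ := ⟨hk, k.2⟩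
  rw [Submodule.inf_orthogonal_eq_bot, Submodule.mem_bot] at this
  exact Subtype.ext this

variable [CompleteSpace E] [CompleteSpace F]

theorem comp_subtypeL_orthogonal_ker_comp_adjoint (T : E →L[𝕜] F) :
    (T ∘L T.kerᗮ.subtypeL) ∘L (T ∘L T.kerᗮ.subtypeL)† = T ∘L T† := by
  ext y
  simp only [adjoint_comp, Submodule.adjoint_subtypeL, comp_apply, Submodule.subtypeL_apply,
    ← Submodule.starProjection_apply, Submodule.starProjection_orthogonal, sub_apply, id_apply,
    map_sub]
  have hker : T (T.ker.starProjection ((T†) y)) = 0 := T.ker.starProjection_apply_mem _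
  rw [hker, sub_zero]

theorem denseRange_adjoint_of_injective {J : E →L[𝕜] F} (hJ : Function.Injective J) :
    DenseRange (J†) := by
  have hker : J.ker = ⊥ := LinearMap.ker_eq_bot.2 hJ
  rw [DenseRange, ← coe_coe, ← LinearMap.coe_range, Submodule.dense_iff_topologicalClosure_eq_top,
    ← orthogonal_ker, hker, Submodule.bot_orthogonal_eq_top]

end RCLike

section Complex

variable {E F : Type*} [NormedAddCommGroup E] [InnerProductSpace ℂ E] [CompleteSpace E]
  [NormedAddCommGroup F] [InnerProductSpace ℂ F] [CompleteSpace F]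

theorem exists_injective_comp_adjoint_eq {B : F →L[ℂ] F} (hB : 0 ≤ B) :
    ∃ (K : Submodule ℂ F) (_ : CompleteSpace K) (J : K →L[ℂ] F),
      Function.Injective J ∧ J ∘L J† = B := by
  obtain ⟨T, rfl⟩ := CStarAlgebra.nonneg_iff_eq_mul_star_self.1 hB
  exact ⟨T.kerᗮ, inferInstance, T ∘L T.kerᗮ.subtypeL, injective_comp_subtypeL_orthogonal_ker T,
    comp_subtypeL_orthogonal_ker_comp_adjoint T⟩

/-- Douglas' lemma. -/
theorem exists_mem_Icc_comp_comp_adjoint_eq {J : E →L[ℂ] F} (hJ : Function.Injective J)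
    {C : F →L[ℂ] F} (hC : 0 ≤ C) (hCJ : C ≤ J ∘L J†) :
    ∃ X ∈ Icc (0 : E →L[ℂ] E) 1, J ∘L X ∘L J† = C := by
  obtain ⟨S, rfl⟩ := CStarAlgebra.nonneg_iff_eq_star_mul_self.1 hC
  have hbound : ∀ x, ‖S x‖ ≤ ‖(J†) x‖ := by
    intro x
    rw [← pow_le_pow_iff_left₀ (norm_nonneg _) (norm_nonneg _) two_ne_zero,
      apply_norm_sq_eq_inner_adjoint_left, apply_norm_sq_eq_inner_adjoint_left, adjoint_adjoint]
    exact re_inner_apply_le_of_le hCJ x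
  obtain ⟨T, hT, hTJ⟩ := exists_norm_le_one_comp_eq_of_norm_apply_le (𝕜 := ℂ)
    (denseRange_adjoint_of_injective hJ) hbound
  refine ⟨T† ∘L T, CStarAlgebra.mem_Icc_iff_norm_le_one.2 ⟨?_, ?_⟩, ?_⟩
  · exact (nonneg_iff_isPositive _).2 (isPositive_adjoint_comp_self T)
  · rw [norm_adjoint_comp_self]
    nlinarith [norm_nonneg T]
  · rw [← hTJ, star_eq_adjoint, adjoint_comp, adjoint_adjoint]
    rfl

noncomputable def conjAdjoint (J : E →L[ℂ] F) : (E →L[ℂ] E) →ₗ[ℝ] (F →L[ℂ] F) where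
  toFun X := J ∘L X ∘L J†
  map_add' X Y := by rw [add_comp, comp_add]
  map_smul' c X := by ext; simp

@[simp]
theorem conjAdjoint_apply (J : E →L[ℂ] F) (X : E →L[ℂ] E) : conjAdjoint J X = J ∘L X ∘L J† :=
  rfl

theorem conjAdjoint_nonneg (J : E →L[ℂ] F) {X : E →L[ℂ] E} (hX : 0 ≤ X) : 0 ≤ conjAdjoint J X :=
  (nonneg_iff_isPositive _).2 (((nonneg_iff_isPositive X).1 hX).conj_adjoint J)

theorem conjAdjoint_injective {J : E →L[ℂ] F} (hJ : Function.Injective J) :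
    Function.Injective (conjAdjoint J) := by
  intro X Y h
  have hcomp : ∀ y, X ((J†) y) = Y ((J†) y) := fun y => hJ (DFunLike.congr_fun h y)
  exact DFunLike.coe_injective <| (denseRange_adjoint_of_injective hJ).equalizer X.continuous
    Y.continuous (funext hcomp)

theorem image_conjAdjoint_Icc {J : E →L[ℂ] F} (hJ : Function.Injective J) :
    conjAdjoint J '' Icc 0 1 = Icc 0 (J ∘L J†) := by
  ext C
  constructor
  · rintro ⟨X, ⟨hX0, hX1⟩, rfl⟩
    refine ⟨conjAdjoint_nonneg J hX0, ?_⟩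
    have h1 : conjAdjoint J 1 = J ∘L J† := by simp [one_def]
    rw [← h1, ← sub_nonneg, ← map_sub]
    exact conjAdjoint_nonneg J (sub_nonneg.2 hX1)
  · rintro ⟨hC0, hC1⟩
    obtain ⟨X, hX, rfl⟩ := exists_mem_Icc_comp_comp_adjoint_eq hJ hC0 hC1
    exact ⟨X, hX, rfl⟩

theorem mem_extremePoints_Icc_comp_adjoint_iff {J : E →L[ℂ] F} (hJ : Function.Injective J)
    {A : F →L[ℂ] F} :
    A ∈ extremePoints ℝ (Icc 0 (J ∘L J†)) ↔ ∃ P, IsStarProjection P ∧ J ∘L P ∘L J† = A := by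
  rw [← image_conjAdjoint_Icc hJ,
    ← (conjAdjoint J).image_extremePoints_of_injective (conjAdjoint_injective hJ)]
  simp [mem_extremePoints_Icc_zero_one_iff]

end Complex

end ContinuousLinearMap

theorem extreme_point_iff_projection_factorization_general
    {H : Type u} [NormedAddCommGroup H] [InnerProductSpace ℂ H] [CompleteSpace H]
    (A B : H →L[ℂ] H) :
    A ∈ Set.extremePoints ℝ {C : H →L[ℂ] H | IsPosOp C ∧ OpLe C B} ↔
      ∃ (K : Type u) (_ : NormedAddCommGroup K) (_ : InnerProductSpace ℂ K)
        (_ : CompleteSpace K) (J : K →L[ℂ] H) (P : K →L[ℂ] K),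
        Function.Injective J ∧
        J.comp (ContinuousLinearMap.adjoint J) = B ∧
        ContinuousLinearMap.adjoint P = P ∧ P.comp P = P ∧
        A = J.comp (P.comp (ContinuousLinearMap.adjoint J)) := by
  have hIcc : {C : H →L[ℂ] H | IsPosOp C ∧ OpLe C B} = Icc 0 B := by
    ext C
    simp only [mem_ofPred_eq, isPosOp_iff_nonneg, opLe_iff_le, mem_Icc]
  rw [hIcc]
  constructor
  · intro hA
    obtain ⟨hA0, hAB⟩ := extremePoints_subset hA
    obtain ⟨K, _, J, hJ, rfl⟩ :=
      ContinuousLinearMap.exists_injective_comp_adjoint_eq (hA0.trans hAB)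
    obtain ⟨P, hP, rfl⟩ := (ContinuousLinearMap.mem_extremePoints_Icc_comp_adjoint_iff hJ).1 hA
    exact ⟨K, inferInstance, inferInstance, inferInstance, J, P, hJ, rfl,
      ContinuousLinearMap.isSelfAdjoint_iff'.1 hP.isSelfAdjoint, hP.isIdempotentElem, rfl⟩
  · rintro ⟨K, _, _, _, J, P, hJ, rfl, hPadj, hPP, rfl⟩
    exact (ContinuousLinearMap.mem_extremePoints_Icc_comp_adjoint_iff hJ).2
      ⟨P, ⟨hPP, ContinuousLinearMap.isSelfAdjoint_iff'.2 hPadj⟩, rfl⟩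

theorem extreme_point_iff_projection_factorization
    {H : Type u} [NormedAddCommGroup H] [InnerProductSpace ℂ H] [CompleteSpace H]
    (A B : H →L[ℂ] H) (hA : IsPosOp A) (hB : IsPosOp B) (hAB : OpLe A B) :
    A ∈ Set.extremePoints ℝ {C : H →L[ℂ] H | IsPosOp C ∧ OpLe C B} ↔
      ∃ (K : Type u) (_ : NormedAddCommGroup K) (_ : InnerProductSpace ℂ K)
        (_ : CompleteSpace K) (J : K →L[ℂ] H) (P : K →L[ℂ] K),
        Function.Injective J ∧
        J.comp (ContinuousLinearMap.adjoint J) = B ∧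
        ContinuousLinearMap.adjoint P = P ∧ P.comp P = P ∧
        A = J.comp (P.comp (ContinuousLinearMap.adjoint J)) :=
  extreme_point_iff_projection_factorization_general A B
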